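/- For integers n ≥ 0 and 0 ≤ k ≤ n, let N(n,k) be the number of 321-avoiding permutations π of {1,…,n+1} such that exactly n − k indices i ∈ {1,…,n} satisfy π({1,…,i}) = {1,…,i}. Then (n+1)·N(n,k) = (n−k+1)·binom(n+k, k); that is, N(n,k) equals the number of standard Young tableaux of shape (n,k), which by the hook length formula is ((n−k+1)/(n+1))·binom(n+k, k). -/

import Mathlib

/-!
Recording the prefix maxima `i ↦ max (π 0, …, π i)` identifies the 321-avoiding permutations of
`Fin m` with the monotone maps `M : Fin m → Fin m` satisfying `i ≤ M i` (Dyck maps): at the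
records of `M` the permutation takes the values of `M`, and 321-avoidance forces the remaining
values to fill the remaining positions increasingly. Since `π {0, …, i} = {0, …, i}` exactly when `M i = i`, the permutations
counted by `N(n, k)` correspond to the Dyck maps on `Fin (n + 1)` with exactly `k` excedances
`i < M i`.

Let `D(m, k)` be the number of Dyck maps on `Fin m` with `k` excedances. A Dyck map on
`Fin (m + 1)` either fixes `0`, and is then a Dyck map on `Fin m` shifted by one, or it does not;
then lowering it by one up to the first `p` with `M p = p + 1` trades one excedance for a fixed
point, and raising by one up to the first fixed point undoes this. Hence
`D(m + 1, k + 1) = D(m, k + 1) + D(m + 1, k)`, the ballot recurrence, which gives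
`D(n + 1, k + 1) = C(n + k + 1, k + 1) - C(n + k + 1, k)` and the formula.
-/

/-- A permutation `π` of `{1,…,m}` (modeled as `Fin m`, where the 1-based index `i`
corresponds to the element of value `i - 1`) is 321-avoiding if there are no indices
`i < j < k` with `π k < π j < π i`. -/
def Avoids321 {m : ℕ} (π : Equiv.Perm (Fin m)) : Prop :=
  ∀ i j k : Fin m, i < j → j < k → ¬(π k < π j ∧ π j < π i)

open Finset

lemma Finset.orderEmbOfFin_le_iff {α : Type*} [LinearOrder α] {s : Finset α} {k : ℕ}
    (h : #s = k) (r : Fin k) (a : α) : s.orderEmbOfFin h r ≤ a ↔ (r : ℕ) < #{x ∈ s | x ≤ a} := by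
  set f := s.orderEmbOfFin h
  constructor
  · intro hr
    have hsub : (Iic r).map f.toEmbedding ⊆ {x ∈ s | x ≤ a} := by
      simp only [subset_iff, mem_map, mem_Iic, mem_filter]
      rintro _ ⟨r', hr', rfl⟩
      exact ⟨orderEmbOfFin_mem s h r', (f.monotone hr').trans hr⟩
    have := card_le_card hsub
    rw [card_map, Fin.card_Iic] at this
    omega
  · intro hr
    by_contra! har
    have hsub : ({x ∈ s | x ≤ a} : Finset α) ⊆ (Iio r).map f.toEmbedding := by
      intro x hx
      obtain ⟨hxs, hxa⟩ := mem_filter.1 hx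
      obtain ⟨r', rfl⟩ : x ∈ Set.range f := by rwa [range_orderEmbOfFin]
      exact mem_map_of_mem _ (mem_Iio.2 (f.lt_iff_lt.1 (hxa.trans_lt har)))
    have := card_le_card hsub
    rw [card_map, Fin.card_Iio] at this
    omega

lemma Fin.card_filter_compl_add_card_filter {m : ℕ} (s : Finset (Fin m)) (a : Fin m) :
    #{x ∈ sᶜ | x ≤ a} + #{x ∈ s | x ≤ a} = a + 1 := by
  rw [card_filter, card_filter, sum_compl_add_sum, ← card_filter, filter_ge_eq_Iic, Fin.card_Iic]

/-- `M i + 1` is the number of up-steps before the `(i + 1)`-st down-step of a Dyck path of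
semilength `m`; the fixed points of `M` are the returns of the path to the axis. -/
structure IsDyckMap {m : ℕ} (M : Fin m → Fin m) : Prop where
  monotone : Monotone M
  le_apply : ∀ i, i ≤ M i

def numExcedances {m : ℕ} (M : Fin m → Fin m) : ℕ := #{i | i < M i}

abbrev DyckMaps (m k : ℕ) : Type := {M : Fin m → Fin m // IsDyckMap M ∧ numExcedances M = k}

section Count

variable {m : ℕ}

lemma IsDyckMap.eq_id_of_numExcedances_eq_zero {M : Fin m → Fin m} (hM : IsDyckMap M)
    (h : numExcedances M = 0) : M = id := by
  funext i
  have hi : ¬ i < M i := by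
    simp only [numExcedances, card_eq_zero, filter_eq_empty_iff, mem_univ, true_implies] at h
    exact @h i
  exact ((hM.le_apply i).lt_or_eq.resolve_left hi).symm

lemma numExcedances_le (M : Fin (m + 1) → Fin (m + 1)) :
    numExcedances M ≤ m := by
  have hsub : ({i | i < M i} : Finset _) ⊆ univ.erase (Fin.last m) := fun i hi => by
    simp only [mem_filter, mem_univ, true_and] at hi
    exact mem_erase.2 ⟨(hi.trans_le (Fin.le_last _)).ne, mem_univ _⟩
  exact (card_le_card hsub).trans (by simp)

lemma card_dyckMaps_zero (m : ℕ) : Nat.card (DyckMaps m 0) = 1 := by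
  rw [Nat.card_eq_one_iff_unique]
  refine ⟨⟨fun M N => Subtype.ext ?_⟩,
    ⟨⟨id, ⟨monotone_id, fun _ => le_rfl⟩, by simp [numExcedances]⟩⟩⟩
  rw [M.2.1.eq_id_of_numExcedances_eq_zero M.2.2, N.2.1.eq_id_of_numExcedances_eq_zero N.2.2]

lemma card_dyckMaps_of_lt {k : ℕ} (h : m < k) : Nat.card (DyckMaps (m + 1) k) = 0 :=
  have : IsEmpty (DyckMaps (m + 1) k) :=
    ⟨fun M => by have := numExcedances_le M.1; omega⟩
  Nat.card_of_isEmpty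

def consFixedZero (N : Fin m → Fin m) : Fin (m + 1) → Fin (m + 1) := Fin.cons 0 (Fin.succ ∘ N)

lemma isDyckMap_consFixedZero {N : Fin m → Fin m} :
    IsDyckMap (consFixedZero N) ↔ IsDyckMap N := by
  constructor
  · intro h
    refine ⟨fun a b hab => ?_, fun i => ?_⟩
    · simpa [consFixedZero] using h.monotone (Fin.succ_le_succ_iff.2 hab)
    · simpa [consFixedZero] using h.le_apply i.succ
  · intro h
    refine ⟨fun a b hab => ?_, fun i => ?_⟩
    · induction a using Fin.cases with
      | zero => simp [consFixedZero]
      | succ a =>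
        induction b using Fin.cases with
        | zero => exact absurd hab (by simp)
        | succ b => simpa [consFixedZero] using h.monotone (Fin.succ_le_succ_iff.1 hab)
    · induction i using Fin.cases with
      | zero => simp [consFixedZero]
      | succ i => simpa [consFixedZero] using h.le_apply i

lemma numExcedances_consFixedZero (N : Fin m → Fin m) :
    numExcedances (consFixedZero N) = numExcedances N := by
  rw [numExcedances, numExcedances, card_filter, card_filter, Fin.sum_univ_succ]
  simp [consFixedZero]

lemma consFixedZero_injective : Function.Injective (consFixedZero (m := m)) :=
  fun _ _ h => (Fin.succ_injective _).comp_left (Fin.cons_right_injective _ h)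

lemma exists_consFixedZero_eq {M : Fin (m + 1) → Fin (m + 1)} (hM : IsDyckMap M) (h0 : M 0 = 0) :
    ∃ N, consFixedZero N = M := by
  refine ⟨fun j => (M j.succ).pred (Fin.pos_iff_ne_zero.1
    ((Fin.succ_pos j).trans_le (hM.le_apply _))), ?_⟩
  funext i
  induction i using Fin.cases with
  | zero => exact h0.symm
  | succ i => simp [consFixedZero]

noncomputable def dyckMapsEquivFixingZero (m k : ℕ) :
    DyckMaps m k ≃ {M : DyckMaps (m + 1) k // M.1 0 = 0} :=
  Equiv.ofBijective
    (fun N => ⟨⟨consFixedZero N.1, isDyckMap_consFixedZero.2 N.2.1,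
      (numExcedances_consFixedZero _).trans N.2.2⟩, rfl⟩)
    ⟨fun N N' h => Subtype.ext (consFixedZero_injective (congrArg (·.1.1) h)), fun M => by
      obtain ⟨N, hN⟩ := exists_consFixedZero_eq M.1.2.1 M.2
      refine ⟨⟨N, isDyckMap_consFixedZero.1 (hN ▸ M.1.2.1),
        (numExcedances_consFixedZero N).symm.trans (hN ▸ M.1.2.2)⟩, ?_⟩
      exact Subtype.ext (Subtype.ext hN)⟩

def lowerInitial (M : Fin m → Fin m) (j : Fin m) : Fin m :=
  if ∀ i < j, (i : ℕ) + 1 < M i then ⟨(M j : ℕ) - 1, by omega⟩ else M j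

def raiseInitial (N : Fin (m + 1) → Fin (m + 1)) (j : Fin (m + 1)) : Fin (m + 1) :=
  if ∀ i < j, N i ≠ i then ⟨min ((N j : ℕ) + 1) m, by omega⟩ else N j

lemma lowerInitial_val {M : Fin m → Fin m} {p : Fin m} (hp : (M p : ℕ) = p + 1)
    (hlt : ∀ i < p, (i : ℕ) + 1 < M i) (j : Fin m) :
    (lowerInitial M j : ℕ) = if j ≤ p then (M j : ℕ) - 1 else M j := by
  by_cases hj : j ≤ p
  · rw [lowerInitial, if_pos fun i hi => hlt i (hi.trans_le hj), if_pos hj]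
  · rw [lowerInitial, if_neg fun h => by have := h p (not_le.1 hj); omega, if_neg hj]

lemma raiseInitial_val {N : Fin (m + 1) → Fin (m + 1)} (hN : Monotone N) {q : Fin (m + 1)}
    (hq : N q = q) (hqm : (q : ℕ) < m) (hlt : ∀ i < q, N i ≠ i) (j : Fin (m + 1)) :
    (raiseInitial N j : ℕ) = if j ≤ q then (N j : ℕ) + 1 else N j := by
  by_cases hj : j ≤ q
  · have : N j ≤ q := hq ▸ hN hj
    rw [raiseInitial, if_pos fun i hi => hlt i (hi.trans_le hj), if_pos hj]
    simp only
    omega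
  · rw [raiseInitial, if_neg fun h => h q (not_le.1 hj) hq, if_neg hj]

namespace IsDyckMap

variable {M N : Fin (m + 1) → Fin (m + 1)}

lemma exists_lowering_point (hM : IsDyckMap M) (h0 : M 0 ≠ 0) :
    ∃ p, (M p : ℕ) = p + 1 ∧ ∀ i < p, (i : ℕ) + 1 < M i := by
  obtain ⟨p, hpS, hpmin⟩ := ({i | (M i : ℕ) ≤ i + 1} : Finset _).exists_min_image id
    ⟨Fin.last m, by simp⟩
  simp only [mem_filter, mem_univ, true_and, id] at hpS hpmin
  have hlt : ∀ i < p, (i : ℕ) + 1 < M i := fun i hi => by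
    by_contra h
    exact (hpmin i (by omega)).not_gt hi
  refine ⟨p, le_antisymm hpS ?_, hlt⟩
  rcases Fin.eq_zero_or_eq_succ p with rfl | ⟨i, rfl⟩
  · have : (M 0 : ℕ) ≠ 0 := fun h => h0 (Fin.ext h)
    simp only [Fin.val_zero]
    omega
  · have h1 := hlt i.castSucc Fin.castSucc_lt_succ
    have h2 := Fin.le_def.1 (hM.monotone (Fin.castSucc_le_succ i))
    simp only [Fin.val_castSucc, Fin.val_succ] at h1 h2 ⊢
    omega

lemma exists_raising_point (hN : IsDyckMap N) (hk : numExcedances N < m) :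
    ∃ q, N q = q ∧ (q : ℕ) < m ∧ ∀ i < q, N i ≠ i := by
  have hfix : ∃ i, N i = i ∧ i ≠ Fin.last m := by
    by_contra! h
    have hsub : univ.erase (Fin.last m) ⊆ ({i | i < N i} : Finset _) := fun i hi => by
      simp only [mem_erase, mem_filter, mem_univ, true_and] at hi ⊢
      exact (hN.le_apply i).lt_of_ne fun hi' => hi.1 (h i hi'.symm)
    have := card_le_card hsub
    simp only [card_erase_of_mem (mem_univ _), card_univ, Fintype.card_fin,
      Nat.add_sub_cancel] at this
    exact absurd hk (not_lt.2 this)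
  obtain ⟨i, hi, hil⟩ := hfix
  obtain ⟨q, hqS, hqmin⟩ := ({i | N i = i} : Finset _).exists_min_image id ⟨i, by simpa using hi⟩
  simp only [mem_filter, mem_univ, true_and, id] at hqS hqmin
  refine ⟨q, hqS, ?_, fun j hj hfj => (hqmin j hfj).not_gt hj⟩
  have := hqmin i hi
  have := Fin.val_lt_last hil
  omega

end IsDyckMap

variable {M N : Fin (m + 1) → Fin (m + 1)}

lemma isDyckMap_lowerInitial (hM : IsDyckMap M) (h0 : M 0 ≠ 0) : IsDyckMap (lowerInitial M) := by
  obtain ⟨p, hp, hlt⟩ := hM.exists_lowering_point h0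
  refine ⟨fun a b hab => ?_, fun j => ?_⟩
  · have := hM.monotone hab
    rw [Fin.le_def, lowerInitial_val hp hlt, lowerInitial_val hp hlt]
    split_ifs <;> omega
  · rw [Fin.le_def, lowerInitial_val hp hlt]
    have := hM.le_apply j
    split_ifs with hj
    · rcases hj.lt_or_eq with hj | rfl
      · have := hlt j hj
        omega
      · omega
    · omega

lemma numExcedances_lowerInitial (hM : IsDyckMap M) (h0 : M 0 ≠ 0) :
    numExcedances (lowerInitial M) + 1 = numExcedances M := by
  obtain ⟨p, hp, hlt⟩ := hM.exists_lowering_point h0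
  have hexc : ({j | j < lowerInitial M j} : Finset _) = ({j | j < M j} : Finset _).erase p := by
    ext j
    simp only [mem_erase, mem_filter, mem_univ, true_and, Fin.lt_def, lowerInitial_val hp hlt]
    rcases lt_trichotomy j p with hj | rfl | hj
    · have := hlt j hj
      rw [if_pos hj.le]
      simp only [ne_eq, hj.ne, not_false_eq_true, true_and]
      omega
    · rw [if_pos le_rfl]
      simp only [ne_eq, not_true_eq_false, false_and, iff_false]
      omega
    · rw [if_neg (not_le.2 hj)]
      simp [hj.ne']
  have hpexc : p ∈ ({j | j < M j} : Finset _) := by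
    simp only [mem_filter, mem_univ, true_and]
    omega
  rw [numExcedances, numExcedances, hexc, card_erase_of_mem hpexc]
  have := card_pos.2 ⟨p, hpexc⟩
  omega

lemma raiseInitial_lowerInitial (hM : IsDyckMap M) (h0 : M 0 ≠ 0) :
    raiseInitial (lowerInitial M) = M := by
  obtain ⟨p, hp, hlt⟩ := hM.exists_lowering_point h0
  have hfix : lowerInitial M p = p :=
    Fin.ext (by rw [lowerInitial_val hp hlt, if_pos le_rfl]; omega)
  have hnofix : ∀ i < p, lowerInitial M i ≠ i := fun i hi h => by
    have := hlt i hi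
    rw [Fin.ext_iff, lowerInitial_val hp hlt, if_pos hi.le] at h
    omega
  have hpm : (p : ℕ) < m := by have := (M p).isLt; omega
  funext j
  rw [Fin.ext_iff, raiseInitial_val (isDyckMap_lowerInitial hM h0).monotone hfix hpm hnofix,
    lowerInitial_val hp hlt]
  split_ifs with hj
  · have : (j : ℕ) + 1 ≤ M j := by
      rcases hj.lt_or_eq with hj | rfl
      · exact (hlt j hj).le
      · omega
    omega
  · rfl

lemma isDyckMap_raiseInitial (hN : IsDyckMap N) (hk : numExcedances N < m) :
    IsDyckMap (raiseInitial N) := by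
  obtain ⟨q, hq, hqm, hlt⟩ := hN.exists_raising_point hk
  have hval := raiseInitial_val hN.monotone hq hqm hlt
  refine ⟨fun a b hab => ?_, fun j => ?_⟩
  · have := hN.monotone hab
    have := hN.le_apply b
    rw [Fin.le_def, hval, hval]
    split_ifs with ha hb
    · omega
    · have := hN.monotone ha
      omega
    · omega
    · omega
  · have := hN.le_apply j
    rw [Fin.le_def, hval]
    split_ifs <;> omega

lemma raiseInitial_zero_ne_zero (hN : IsDyckMap N) (hk : numExcedances N < m) :
    raiseInitial N 0 ≠ 0 := by
  obtain ⟨q, hq, hqm, hlt⟩ := hN.exists_raising_point hk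
  rw [Ne, Fin.ext_iff, raiseInitial_val hN.monotone hq hqm hlt, if_pos (Fin.zero_le q)]
  simp

lemma lowerInitial_raiseInitial (hN : IsDyckMap N) (hk : numExcedances N < m) :
    lowerInitial (raiseInitial N) = N := by
  obtain ⟨q, hq, hqm, hlt⟩ := hN.exists_raising_point hk
  have hval := raiseInitial_val hN.monotone hq hqm hlt
  have hq' : (raiseInitial N q : ℕ) = q + 1 := by rw [hval, if_pos le_rfl, hq]
  have hlt' : ∀ i < q, (i : ℕ) + 1 < raiseInitial N i := fun i hi => by
    have := (hN.le_apply i).lt_of_ne (hlt i hi).symm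
    rw [hval, if_pos hi.le]
    omega
  funext j
  rw [Fin.ext_iff, lowerInitial_val hq' hlt', hval]
  split_ifs <;> rfl

noncomputable def dyckMapsEquivMovingZero {k : ℕ} (hk : k < m) :
    {M : DyckMaps (m + 1) (k + 1) // M.1 0 ≠ 0} ≃ DyckMaps (m + 1) k where
  toFun M := ⟨lowerInitial M.1.1, isDyckMap_lowerInitial M.1.2.1 M.2, by
    have := numExcedances_lowerInitial M.1.2.1 M.2
    have := M.1.2.2
    omega⟩
  invFun N :=
    have hN : numExcedances N.1 < m := N.2.2.trans_lt hk
    ⟨⟨raiseInitial N.1, isDyckMap_raiseInitial N.2.1 hN, by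
      have := numExcedances_lowerInitial (isDyckMap_raiseInitial N.2.1 hN)
        (raiseInitial_zero_ne_zero N.2.1 hN)
      rw [lowerInitial_raiseInitial N.2.1 hN, N.2.2] at this
      exact this.symm⟩, raiseInitial_zero_ne_zero N.2.1 hN⟩
  left_inv M := Subtype.ext (Subtype.ext (raiseInitial_lowerInitial M.1.2.1 M.2))
  right_inv N := Subtype.ext (lowerInitial_raiseInitial N.2.1 (N.2.2.trans_lt hk))

lemma card_dyckMaps_succ_succ {k : ℕ} (hk : k < m) :
    Nat.card (DyckMaps (m + 1) (k + 1)) =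
      Nat.card (DyckMaps m (k + 1)) + Nat.card (DyckMaps (m + 1) k) := by
  rw [← Nat.card_congr (Equiv.sumCompl fun M : DyckMaps (m + 1) (k + 1) => M.1 0 = 0), Nat.card_sum,
    Nat.card_congr (dyckMapsEquivFixingZero m (k + 1)).symm,
    Nat.card_congr (dyckMapsEquivMovingZero hk)]

lemma card_dyckMaps_add_choose (n k : ℕ) (hk : k ≤ n) :
    Nat.card (DyckMaps (n + 1) (k + 1)) + (n + k + 1).choose k = (n + k + 1).choose (k + 1) := by
  induction n generalizing k with
  | zero =>
    obtain rfl : k = 0 := by omega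
    simp [card_dyckMaps_of_lt]
  | succ n ihn =>
    induction k with
    | zero =>
      have := ihn 0 (Nat.zero_le n)
      rw [card_dyckMaps_succ_succ (by omega), card_dyckMaps_zero]
      simp only [Nat.add_zero, zero_add, Nat.choose_zero_right, Nat.choose_one_right] at this ⊢
      omega
    | succ k ihk =>
      rcases Nat.lt_or_ge k n with hkn | hkn
      · have h1 := ihn (k + 1) hkn
        have h2 := ihk (by omega)
        rw [show n + (k + 1) + 1 = n + k + 2 by ring] at h1
        rw [show n + 1 + k + 1 = n + k + 2 by ring] at h2
        rw [card_dyckMaps_succ_succ (by omega), show n + 1 + (k + 1) + 1 = n + k + 2 + 1 by ring,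
          Nat.choose_succ_succ' (n + k + 2) k, Nat.choose_succ_succ' (n + k + 2) (k + 1)]
        omega
      · obtain rfl : k = n := by omega
        rw [card_dyckMaps_of_lt (by omega), zero_add,
          Nat.choose_symm_of_eq_add (show k + 1 + (k + 1) + 1 = (k + 1) + (k + 1 + 1) by ring)]

theorem succ_mul_card_dyckMaps (n k : ℕ) (hk : k ≤ n) :
    (n + 1) * Nat.card (DyckMaps (n + 1) k) = (n - k + 1) * (n + k).choose k := by
  cases k with
  | zero => simp [card_dyckMaps_zero]
  | succ k =>
    have h1 := card_dyckMaps_add_choose n k (by omega)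
    have h2 := Nat.choose_succ_right_eq (n + k + 1) k
    obtain ⟨d, rfl⟩ := Nat.exists_eq_add_of_le hk
    rw [show k + 1 + d + k + 1 - k = k + d + 2 by omega] at h2
    rw [show k + 1 + d - (k + 1) + 1 = d + 1 by omega,
      show k + 1 + d + (k + 1) = k + 1 + d + k + 1 by omega]
    zify at h1 h2 ⊢
    linear_combination (k + d + 2 : ℤ) * h1 + h2

end Count

namespace Equiv.Perm

variable {m : ℕ} (π : Perm (Fin m))

def prefixMax (i : Fin m) : Fin m := (Iic i).sup' nonempty_Iic π

variable {π}

lemma prefixMax_le_iff {i a : Fin m} : π.prefixMax i ≤ a ↔ ∀ j ≤ i, π j ≤ a := by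
  rw [prefixMax, sup'_le_iff]
  simp only [mem_Iic]

lemma le_prefixMax {i j : Fin m} (h : j ≤ i) : π j ≤ π.prefixMax i :=
  prefixMax_le_iff.1 le_rfl j h

lemma exists_eq_prefixMax (i : Fin m) : ∃ j ≤ i, π j = π.prefixMax i := by
  obtain ⟨j, hj, h⟩ := exists_mem_eq_sup' nonempty_Iic π
  exact ⟨j, mem_Iic.1 hj, h.symm⟩

lemma monotone_prefixMax : Monotone π.prefixMax := fun _ _ hab =>
  prefixMax_le_iff.2 fun _ hj => le_prefixMax (hj.trans hab)

/-- The `i + 1` distinct values `π 0, …, π i` all lie in `Iic (π.prefixMax i)`. -/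
lemma le_prefixMax_self (i : Fin m) : i ≤ π.prefixMax i := by
  have := card_le_card_of_injOn π (s := Iic i) (t := Iic (π.prefixMax i))
    (fun j hj => mem_Iic.2 (le_prefixMax (mem_Iic.1 hj))) π.injective.injOn
  rw [Fin.card_Iic, Fin.card_Iic] at this
  exact Fin.le_def.2 (by omega)

lemma isDyckMap_prefixMax : IsDyckMap π.prefixMax := ⟨monotone_prefixMax, le_prefixMax_self⟩

lemma image_Iic_eq_iff {i : Fin m} : π '' Set.Iic i = Set.Iic i ↔ π.prefixMax i = i := by
  refine ⟨fun h => (prefixMax_le_iff.2 fun j hj => ?_).antisymm (le_prefixMax_self i), fun h => ?_⟩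
  · exact h.subset ⟨j, hj, rfl⟩
  · have hmaps : Set.MapsTo π (Set.Iic i) (Set.Iic i) := fun j hj => h ▸ le_prefixMax hj
    exact (((Set.finite_Iic i).injOn_iff_bijOn_of_mapsTo hmaps).1 π.injective.injOn).image_eq

end Equiv.Perm

section Records

variable {m : ℕ} {M : Fin m → Fin m}

def records (M : Fin m → Fin m) : Finset (Fin m) := {i | ∀ j < i, M j < M i}

lemma mem_records {i : Fin m} : i ∈ records M ↔ ∀ j < i, M j < M i := by
  simp [records]

lemma strictMonoOn_records (M : Fin m → Fin m) : StrictMonoOn M (records M) :=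
  fun _ _ _ hb hab => mem_records.1 hb _ hab

lemma IsDyckMap.exists_mem_records (hM : IsDyckMap M) (i : Fin m) :
    ∃ l ∈ records M, l ≤ i ∧ M l = M i := by
  obtain ⟨l, hl, hmin⟩ := ({j | j ≤ i ∧ M j = M i} : Finset _).exists_min_image id ⟨i, by simp⟩
  simp only [mem_filter, mem_univ, true_and, id] at hl hmin
  refine ⟨l, mem_records.2 fun j hj => (hM.monotone hj.le).lt_of_ne fun h => ?_, hl⟩
  exact (hmin j ⟨hj.le.trans hl.1, h.trans hl.2⟩).not_gt hj

lemma card_compl_image_records (M : Fin m → Fin m) :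
    #((records M).image M)ᶜ = #(records M)ᶜ := by
  rw [card_compl, card_compl, card_image_of_injOn (strictMonoOn_records M).injOn]

/-- The increasing bijection from the non-records of `M` onto the values not taken at records. -/
def gapMap (M : Fin m → Fin m) (i : {i // i ∉ records M}) : Fin m :=
  ((records M).image M)ᶜ.orderEmbOfFin (card_compl_image_records M)
    (((records M)ᶜ.orderIsoOfFin rfl).symm ⟨i, mem_compl.2 i.2⟩)

lemma gapMap_notMem_image (i : {i // i ∉ records M}) : gapMap M i ∉ (records M).image M :=
  mem_compl.1 (orderEmbOfFin_mem _ _ _)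

lemma strictMono_gapMap : StrictMono (gapMap M) :=
  (orderEmbOfFin _ _).strictMono.comp fun _ _ h => (OrderIso.lt_iff_lt _).2 h

lemma IsDyckMap.card_compl_records_le (hM : IsDyckMap M) (i : Fin m) :
    #{x ∈ (records M)ᶜ | x ≤ i} ≤ #{v ∈ ((records M).image M)ᶜ | v ≤ M i} := by
  have hJ := Fin.card_filter_compl_add_card_filter (records M) i
  have hV := Fin.card_filter_compl_add_card_filter ((records M).image M) (M i)
  have hsub : ({v ∈ (records M).image M | v ≤ M i} : Finset _) ⊆
      ({x ∈ records M | x ≤ i} : Finset _).image M := by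
    simp only [subset_iff, mem_filter, mem_image]
    rintro _ ⟨⟨a, ha, rfl⟩, hai⟩
    exact ⟨a, ⟨ha, not_lt.1 fun hia => (mem_records.1 ha i hia).not_ge hai⟩, rfl⟩
  have := (card_le_card hsub).trans card_image_le
  have := Fin.le_def.1 (hM.le_apply i)
  omega

lemma IsDyckMap.gapMap_le (hM : IsDyckMap M) (i : {i // i ∉ records M}) : gapMap M i ≤ M i := by
  set r := ((records M)ᶜ.orderIsoOfFin rfl).symm ⟨i, mem_compl.2 i.2⟩
  have hr : (records M)ᶜ.orderEmbOfFin rfl r = i := by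
    rw [← coe_orderIsoOfFin_apply, OrderIso.apply_symm_apply]
  have := (orderEmbOfFin_le_iff rfl r i).1 hr.le
  exact (orderEmbOfFin_le_iff _ r _).2 (this.trans_le (hM.card_compl_records_le i))

lemma eq_gapMap {f : {i // i ∉ records M} → Fin m} (hf : StrictMono f)
    (hmem : ∀ i, f i ∉ (records M).image M) : f = gapMap M := by
  set e := (records M)ᶜ.orderIsoOfFin rfl
  have hg := orderEmbOfFin_unique (card_compl_image_records M)
    (f := fun r => f ⟨e r, mem_compl.1 (e r).2⟩) (fun r => mem_compl.2 (hmem _))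
    fun r r' h => hf (e.lt_iff_lt.2 h)
  funext i
  have := congrFun hg (e.symm ⟨i, mem_compl.2 i.2⟩)
  simp only [OrderIso.apply_symm_apply] at this
  exact this

end Records

section PermOfPrefixMax

variable {m : ℕ} {M : Fin m → Fin m}

noncomputable def permOfPrefixMax (M : Fin m → Fin m) : Equiv.Perm (Fin m) :=
  Equiv.ofBijective (fun i => if h : i ∈ records M then M i else gapMap M ⟨i, h⟩) <|
    Finite.injective_iff_bijective.1 <| Function.Injective.dite (· ∈ records M)
      (fun a b h => Subtype.ext ((strictMonoOn_records M).injOn a.2 b.2 h))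
      strictMono_gapMap.injective
      fun {_ x' hx hx'} h => gapMap_notMem_image ⟨x', hx'⟩ (h ▸ mem_image_of_mem M hx)

lemma permOfPrefixMax_apply_of_mem {i : Fin m} (h : i ∈ records M) :
    permOfPrefixMax M i = M i := by
  simp [permOfPrefixMax, h]

lemma permOfPrefixMax_apply_of_notMem {i : Fin m} (h : i ∉ records M) :
    permOfPrefixMax M i = gapMap M ⟨i, h⟩ := by
  simp [permOfPrefixMax, h]

lemma IsDyckMap.permOfPrefixMax_le (hM : IsDyckMap M) (i : Fin m) : permOfPrefixMax M i ≤ M i := by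
  by_cases h : i ∈ records M
  · exact (permOfPrefixMax_apply_of_mem h).le
  · exact (permOfPrefixMax_apply_of_notMem h).trans_le (hM.gapMap_le _)

lemma IsDyckMap.permOfPrefixMax_le_of_mem_records (hM : IsDyckMap M) {i l : Fin m}
    (hl : l ∈ records M) (hil : i ≤ l) : permOfPrefixMax M i ≤ permOfPrefixMax M l :=
  (hM.permOfPrefixMax_le i).trans
    ((hM.monotone hil).trans_eq (permOfPrefixMax_apply_of_mem hl).symm)

lemma IsDyckMap.prefixMax_permOfPrefixMax (hM : IsDyckMap M) :
    (permOfPrefixMax M).prefixMax = M := by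
  funext i
  refine le_antisymm (Equiv.Perm.prefixMax_le_iff.2 fun j hj =>
    (hM.permOfPrefixMax_le j).trans (hM.monotone hj)) ?_
  obtain ⟨l, hl, hli, hMl⟩ := hM.exists_mem_records i
  rw [← hMl, ← permOfPrefixMax_apply_of_mem hl]
  exact Equiv.Perm.le_prefixMax hli

lemma IsDyckMap.avoids321_permOfPrefixMax (hM : IsDyckMap M) : Avoids321 (permOfPrefixMax M) := by
  rintro i j k hij hjk ⟨hkj, hji⟩
  have hj : j ∉ records M := fun h => (hM.permOfPrefixMax_le_of_mem_records h hij.le).not_gt hji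
  have hk : k ∉ records M := fun h => (hM.permOfPrefixMax_le_of_mem_records h hjk.le).not_gt hkj
  rw [permOfPrefixMax_apply_of_notMem hj, permOfPrefixMax_apply_of_notMem hk] at hkj
  exact (strictMono_gapMap (M := M)
    (show (⟨j, hj⟩ : {i // i ∉ records M}) < ⟨k, hk⟩ from hjk)).not_gt hkj

end PermOfPrefixMax

namespace Equiv.Perm

variable {m : ℕ} {π : Perm (Fin m)}

lemma apply_eq_prefixMax_of_mem_records {i : Fin m} (h : i ∈ records π.prefixMax) :
    π i = π.prefixMax i := by
  obtain ⟨j, hji, hj⟩ := exists_eq_prefixMax (π := π) i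
  rcases hji.lt_or_eq with hji | rfl
  · exact absurd (hj ▸ le_prefixMax (π := π) (le_refl j)) (mem_records.1 h j hji).not_ge
  · exact hj

lemma apply_notMem_image_records {i : Fin m} (h : i ∉ records π.prefixMax) :
    π i ∉ (records π.prefixMax).image π.prefixMax := by
  intro hmem
  obtain ⟨a, ha, hai⟩ := mem_image.1 hmem
  rw [← apply_eq_prefixMax_of_mem_records ha] at hai
  exact h (π.injective hai ▸ ha)

end Equiv.Perm

namespace Avoids321

open Equiv.Perm

variable {m : ℕ} {π : Equiv.Perm (Fin m)}

/-- A non-record value `π i` lies below an earlier value, so any smaller later value would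
complete a `321` pattern. -/
lemma apply_lt_of_notMem_records (hπ : Avoids321 π) {i l : Fin m}
    (h : i ∉ records π.prefixMax) (hil : i < l) : π i < π l := by
  obtain ⟨j, hji, hj⟩ : ∃ j < i, π.prefixMax i ≤ π.prefixMax j := by
    simpa [mem_records] using h
  obtain ⟨j', hj'j, hj'⟩ := exists_eq_prefixMax (π := π) j
  have hij' : π i < π j' :=
    ((le_prefixMax le_rfl).trans (hj.trans_eq hj'.symm)).lt_of_ne
      (π.injective.ne (hj'j.trans_lt hji).ne')
  exact lt_of_not_ge fun hli => hπ j' i l (hj'j.trans_lt hji) hil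
    ⟨(hli.lt_of_ne (π.injective.ne hil.ne')), hij'⟩

lemma permOfPrefixMax_prefixMax (hπ : Avoids321 π) : permOfPrefixMax π.prefixMax = π := by
  ext i
  by_cases h : i ∈ records π.prefixMax
  · rw [permOfPrefixMax_apply_of_mem h, apply_eq_prefixMax_of_mem_records h]
  · rw [permOfPrefixMax_apply_of_notMem h,
      ← eq_gapMap (f := fun i => π i.1) (fun a b hab => hπ.apply_lt_of_notMem_records a.2 hab)
        fun a => apply_notMem_image_records a.2]

end Avoids321

lemma IsDyckMap.card_fixed_castSucc_add_numExcedances {n : ℕ} {M : Fin (n + 1) → Fin (n + 1)}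
    (hM : IsDyckMap M) : #{j : Fin n | M j.castSucc = j.castSucc} + numExcedances M = n := by
  have hlast : ¬ Fin.last n < M (Fin.last n) := not_lt.2 (Fin.le_last _)
  have hsum : ∀ j : Fin n, ((if M j.castSucc = j.castSucc then 1 else 0) +
      if j.castSucc < M j.castSucc then 1 else 0) = 1 := fun j => by
    rcases (hM.le_apply j.castSucc).lt_or_eq with h | h
    · rw [if_neg h.ne', if_pos h]
    · rw [if_pos h.symm, if_neg (h ▸ lt_irrefl _)]
  rw [numExcedances, card_filter, card_filter, Fin.sum_univ_castSucc, if_neg hlast, add_zero,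
    ← sum_add_distrib, sum_congr rfl fun j _ => hsum j]
  simp

lemma Nat.card_subtype_Icc_one_eq_card_fin (n : ℕ) (P : ℕ → Prop) :
    Nat.card {i : ℕ // 1 ≤ i ∧ i ≤ n ∧ P i} = Nat.card {j : Fin n // P (j + 1)} :=
  Nat.card_congr
    { toFun i := ⟨⟨i - 1, by omega⟩, by
        show P (i.1 - 1 + 1)
        rw [Nat.sub_add_cancel i.2.1]
        exact i.2.2.2⟩
      invFun j := ⟨j + 1, by omega, j.1.isLt, j.2⟩
      left_inv i := Subtype.ext (by simp only; omega)
      right_inv j := Subtype.ext (Fin.ext (by simp)) }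

noncomputable def numBreakpoints {n : ℕ} (π : Equiv.Perm (Fin (n + 1))) : ℕ :=
  Nat.card {i : ℕ // 1 ≤ i ∧ i ≤ n ∧
    (fun x : Fin (n + 1) => π x) '' {x : Fin (n + 1) | (x : ℕ) < i} =
      {x : Fin (n + 1) | (x : ℕ) < i}}

lemma numBreakpoints_add_numExcedances {n : ℕ} (π : Equiv.Perm (Fin (n + 1))) :
    numBreakpoints π + numExcedances π.prefixMax = n := by
  have hIic : ∀ j : Fin n, {x : Fin (n + 1) | (x : ℕ) < j + 1} = Set.Iic j.castSucc := fun j => by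
    ext x
    simp [Fin.le_def]
  classical
  rw [numBreakpoints, Nat.card_subtype_Icc_one_eq_card_fin,
    Nat.card_congr (Equiv.subtypeEquivRight
      (q := fun j : Fin n => π.prefixMax j.castSucc = j.castSucc)
      fun j => by rw [hIic]; exact Equiv.Perm.image_Iic_eq_iff),
    Nat.card_eq_fintype_card, Fintype.card_subtype]
  exact Equiv.Perm.isDyckMap_prefixMax.card_fixed_castSucc_add_numExcedances

noncomputable def avoidersEquivDyckMaps {n k : ℕ} (hk : k ≤ n) :
    {π : Equiv.Perm (Fin (n + 1)) // Avoids321 π ∧ numBreakpoints π = n - k} ≃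
      DyckMaps (n + 1) k where
  toFun π := ⟨π.1.prefixMax, Equiv.Perm.isDyckMap_prefixMax, by
    have := numBreakpoints_add_numExcedances π.1
    have := π.2.2
    omega⟩
  invFun M := ⟨permOfPrefixMax M.1, M.2.1.avoids321_permOfPrefixMax, by
    have := numBreakpoints_add_numExcedances (permOfPrefixMax M.1)
    rw [M.2.1.prefixMax_permOfPrefixMax, M.2.2] at this
    omega⟩
  left_inv π := Subtype.ext π.2.1.permOfPrefixMax_prefixMax
  right_inv M := Subtype.ext M.2.1.prefixMax_permOfPrefixMax

/-- For `0 ≤ k ≤ n`, let `N(n,k)` be the number of 321-avoiding permutations `π` of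
`{1,…,n+1}` such that exactly `n − k` indices `i ∈ {1,…,n}` satisfy
`π({1,…,i}) = {1,…,i}` (the 1-based initial segment `{1,…,i}` is
`{x : Fin (n+1) | (x : ℕ) < i}`).  Then `(n+1)·N(n,k) = (n−k+1)·binom(n+k, k)`, i.e. `N(n,k)`
equals the number of standard Young tableaux of shape `(n,k)`. -/
theorem stmt11 (n k : ℕ) (hk : k ≤ n) :
    (n + 1) * Nat.card {π : Equiv.Perm (Fin (n + 1)) // Avoids321 π ∧
        Nat.card {i : ℕ // 1 ≤ i ∧ i ≤ n ∧
          (fun x : Fin (n + 1) => π x) '' {x : Fin (n + 1) | (x : ℕ) < i} =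
            {x : Fin (n + 1) | (x : ℕ) < i}} = n - k} =
      (n - k + 1) * Nat.choose (n + k) k := by
  have := succ_mul_card_dyckMaps n k hk
  rwa [← Nat.card_congr (avoidersEquivDyckMaps hk)] at this
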